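/- arXiv:math/0411386 — 2 statements merged into one kernel-verified Lean document; each statement's English description precedes it below -/
import Mathlib

section
/- (Theorem 3.5, stated via explicit survival functions of the reduced two-state Markov chain) For ε > 0 and μ > 0 set T^ε = exp(μ/ε), and for i ∈ {−, +} define the survival function G_i^ε(u) = exp( −∫₀^u exp(−e_i(r/T^ε)/ε) dr ), u ≥ 0, and the transition-window probability N(ε, μ) = min_{i = ±} [ G_i^ε((a_μ^i − h) T^ε) − G_i^ε((a_μ^i + h) T^ε) ], where a_μ^i = inf{ t ≥ 0 : e_i(t) ≤ μ }. Let M be a compact subset of the resonance interval I_R with μ < e_i(0) for all μ ∈ M and i = ±. Then for all sufficiently small h > 0, lim_{ε → 0} ε · log(1 − N(ε, μ)) = max_{i = ±} { μ − e_i(a_μ^i − h) }, uniformly for μ ∈ M. -/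
open Set Filter Topology

/-- The transition time `a_μ = inf{ t ≥ 0 : e(t) ≤ μ }`. -/
noncomputable def aTime (e : ℝ → ℝ) (μ : ℝ) : ℝ :=
  sInf {t : ℝ | 0 ≤ t ∧ e t ≤ μ}

/-- Survival function of a state with exit rate `exp(−e(t/T^ε)/ε)`, `T^ε = exp(μ/ε)`:
`G^ε(u) = exp(−∫₀^u exp(−e(r/T^ε)/ε) dr)`. -/
noncomputable def survival (e : ℝ → ℝ) (μ ε u : ℝ) : ℝ :=
  Real.exp (-∫ r in (0:ℝ)..u, Real.exp (-(e (r / Real.exp (μ / ε))) / ε))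

/-- Transition-window probability of the reduced two-state Markov chain:
`N(ε,μ) = min_i [G_i^ε((a_μ^i − h)T^ε) − G_i^ε((a_μ^i + h)T^ε)]`. -/
noncomputable def windowProb (ep em : ℝ → ℝ) (h ε μ : ℝ) : ℝ :=
  min (survival ep μ ε ((aTime ep μ - h) * Real.exp (μ / ε)) -
        survival ep μ ε ((aTime ep μ + h) * Real.exp (μ / ε)))
      (survival em μ ε ((aTime em μ - h) * Real.exp (μ / ε)) -
        survival em μ ε ((aTime em μ + h) * Real.exp (μ / ε)))



private lemma eshift_extr {f : ℝ → ℝ} {c t : ℝ}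
    (h : IsLocalExtr f (t + c)) : IsLocalExtr (fun s => f (s + c)) t := by
  have hmap : Filter.map (fun s : ℝ => s + c) (𝓝 t) = 𝓝 (t + c) := by
    simpa using (Homeomorph.addRight c).map_nhds_eq t
  rcases h with h | h
  · exact Or.inl (by
      have h' : ∀ᶠ x in 𝓝 (t + c), f (t + c) ≤ f x := h
      rw [← hmap, Filter.eventually_map] at h'
      exact h')
  · exact Or.inr (by
      have h' : ∀ᶠ x in 𝓝 (t + c), f x ≤ f (t + c) := h
      rw [← hmap, Filter.eventually_map] at h'
      exact h')

private lemma eshift_extr' {f : ℝ → ℝ} {c t : ℝ}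
    (h : IsLocalExtr (fun s => f (s + c)) t) : IsLocalExtr f (t + c) := by
  have hmap : Filter.map (fun s : ℝ => s + c) (𝓝 t) = 𝓝 (t + c) := by
    simpa using (Homeomorph.addRight c).map_nhds_eq t
  rcases h with h | h
  · exact Or.inl (show ∀ᶠ x in 𝓝 (t + c), f (t + c) ≤ f x by
      rw [← hmap, Filter.eventually_map]; exact h)
  · exact Or.inr (show ∀ᶠ x in 𝓝 (t + c), f x ≤ f (t + c) by
      rw [← hmap, Filter.eventually_map]; exact h)

set_option maxHeartbeats 1000000 in
private lemma numericCore (x₁ x₂ L η η' γ ρ β δ ε : ℝ)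
    (hε : 0 < ε) (hδ : 0 < δ) (hη : 0 < η) (hη' : 0 < η') (hγ : 0 < γ)
    (hρ : 0 < ρ) (hβ : 0 < β) (hLβ : L ≤ -β) (hLρ : -ρ < L)
    (hx₁ub : x₁ ≤ Real.exp (L / ε))
    (hx₁lb : η * Real.exp ((L - δ / 4) / ε) ≤ x₁)
    (hx₂lb : η' * Real.exp (γ / 2 / ε) ≤ x₂)
    (hε1 : ε ≤ δ / 2)
    (hε2 : ε ≤ δ / (4 * (1 + |Real.log (η / 3)|)))
    (hε3 : ε ≤ η' * γ ^ 2 / (16 * ρ)) :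
    0 < 1 - (Real.exp (-x₁) - Real.exp (-x₂)) ∧
      |ε * Real.log (1 - (Real.exp (-x₁) - Real.exp (-x₂))) - L| < δ := by
  have hx₁pos : 0 < x₁ := lt_of_lt_of_le (by positivity) hx₁lb
  have hx₁1 : x₁ ≤ 1 := by
    refine hx₁ub.trans ?_
    rw [← Real.exp_zero]
    apply Real.exp_le_exp.2
    apply div_nonpos_of_nonpos_of_nonneg (by linarith) hε.le
  -- 1 - exp(-x₁) ≥ x₁ / 3
  have hone : x₁ / 3 ≤ 1 - Real.exp (-x₁) := by
    have h1 : x₁ + 1 ≤ Real.exp x₁ := Real.add_one_le_exp x₁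
    have h2 : Real.exp (-x₁) * Real.exp x₁ = 1 := by rw [← Real.exp_add]; simp
    have h3 : x₁ * Real.exp (-x₁) ≤ 1 - Real.exp (-x₁) := by
      nlinarith [Real.exp_pos (-x₁), mul_le_mul_of_nonneg_left h1 (Real.exp_pos (-x₁)).le]
    have h4 : Real.exp (-1:ℝ) ≤ Real.exp (-x₁) := Real.exp_le_exp.2 (by linarith)
    have h5 : (1:ℝ)/3 ≤ Real.exp (-1:ℝ) := by
      rw [Real.exp_neg]
      rw [div_le_iff₀ (by norm_num : (0:ℝ) < 3)]
      rw [inv_mul_eq_div, le_div_iff₀ (Real.exp_pos 1)]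
      have := Real.exp_one_lt_d9
      nlinarith
    nlinarith
  have hlow : η / 3 * Real.exp ((L - δ / 4) / ε) ≤ 1 - (Real.exp (-x₁) - Real.exp (-x₂)) := by
    have h1 : 0 < Real.exp (-x₂) := Real.exp_pos _
    nlinarith [Real.exp_pos ((L - δ / 4) / ε)]
  have hDpos : 0 < 1 - (Real.exp (-x₁) - Real.exp (-x₂)) :=
    lt_of_lt_of_le (by positivity) hlow
  -- x₂ is large : x₂ ≥ ρ / ε
  have hx₂big : ρ / ε ≤ x₂ := by
    have hy : 0 < γ / 2 / ε := by positivity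
    have h1 : (γ / 2 / ε / 2) ^ 2 ≤ Real.exp (γ / 2 / ε) := by
      have h2 : Real.exp (γ / 2 / ε) = Real.exp (γ / 2 / ε / 2) * Real.exp (γ / 2 / ε / 2) := by
        rw [← Real.exp_add]; ring_nf
      nlinarith [Real.add_one_le_exp (γ / 2 / ε / 2), hy]
    have h3 : η' * (γ / 2 / ε / 2) ^ 2 ≤ x₂ :=
      le_trans (mul_le_mul_of_nonneg_left h1 hη'.le) hx₂lb
    have h4 : η' * (γ / 2 / ε / 2) ^ 2 = η' * γ ^ 2 / (16 * ε ^ 2) := by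
      field_simp; ring
    rw [h4] at h3
    refine le_trans ?_ h3
    rw [div_le_div_iff₀ hε (by positivity)]
    have h5 : ε * (16 * ρ) ≤ η' * γ ^ 2 :=
      (le_div_iff₀ (by positivity : (0:ℝ) < 16 * ρ)).1 hε3
    nlinarith [hε, sq_nonneg ε]
  have hup : 1 - (Real.exp (-x₁) - Real.exp (-x₂)) ≤ 2 * Real.exp (L / ε) := by
    have h1 : 1 - Real.exp (-x₁) ≤ x₁ := by
      have := Real.add_one_le_exp (-x₁)
      linarith
    have h2 : Real.exp (-x₂) ≤ Real.exp (L / ε) := by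
      apply Real.exp_le_exp.2
      have h6 : -ρ / ε ≤ L / ε := (div_le_div_iff_of_pos_right hε).2 hLρ.le
      rw [neg_div] at h6
      linarith
    linarith [hx₁ub]
  refine ⟨hDpos, ?_⟩
  have hlogup : ε * Real.log (1 - (Real.exp (-x₁) - Real.exp (-x₂))) ≤ L + δ / 2 := by
    have hlog1 := Real.log_le_log hDpos hup
    rw [Real.log_mul two_ne_zero (Real.exp_ne_zero _), Real.log_exp] at hlog1
    have h1 := mul_le_mul_of_nonneg_left hlog1 hε.le
    have heq : ε * (Real.log 2 + L / ε) = ε * Real.log 2 + L := by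
      rw [mul_add, mul_div_cancel₀ _ hε.ne']
    rw [heq] at h1
    have hl2 : Real.log 2 ≤ 1 := by
      have := Real.log_two_lt_d9
      linarith
    have h7 : ε * Real.log 2 ≤ ε := mul_le_of_le_one_right hε.le hl2
    linarith
  have hloglo : L - δ / 2 ≤ ε * Real.log (1 - (Real.exp (-x₁) - Real.exp (-x₂))) := by
    have hlog2 := Real.log_le_log (by positivity) hlow
    rw [Real.log_mul (by positivity : (η / 3 : ℝ) ≠ 0) (Real.exp_ne_zero _),
      Real.log_exp] at hlog2
    have h1 := mul_le_mul_of_nonneg_left hlog2 hε.le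
    have heq : ε * (Real.log (η / 3) + (L - δ / 4) / ε) =
        ε * Real.log (η / 3) + (L - δ / 4) := by
      rw [mul_add, mul_div_cancel₀ _ hε.ne']
    rw [heq] at h1
    have h2 : ε * (4 * (1 + |Real.log (η / 3)|)) ≤ δ :=
      (le_div_iff₀ (by positivity)).1 hε2
    have h3 : -(δ / 4) ≤ ε * Real.log (η / 3) := by
      have h4 : -|Real.log (η / 3)| ≤ Real.log (η / 3) := neg_abs_le _
      have h5 := mul_le_mul_of_nonneg_left h4 hε.le
      rw [mul_neg] at h5
      have hexp : ε * (4 * (1 + |Real.log (η / 3)|)) =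
          4 * ε + 4 * (ε * |Real.log (η / 3)|) := by ring
      rw [hexp] at h2
      have h8 : ε * |Real.log (η / 3)| ≤ δ / 4 := by linarith
      linarith
    linarith
  rw [abs_lt]
  constructor <;> linarith

set_option maxHeartbeats 4000000 in
private lemma keyLemma (e : ℝ → ℝ) (hc : Continuous e) (hp : ∀ t, e (t + 1) = e t)
    (hext : ∀ t, IsLocalExtr e t → e t = sSup (range e) ∨ e t = sInf (range e))
    (hmono : ∀ a c : ℝ, a < c → (∀ t ∈ Ioo a c, ¬ IsLocalExtr e t) →
      StrictMonoOn e (Icc a c) ∨ StrictAntiOn e (Icc a c))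
    (M : Set ℝ) (hMc : IsCompact M)
    (hMlow : ∀ μ ∈ M, sInf (range e) < μ) (hMhigh : ∀ μ ∈ M, μ < e 0) :
    ∃ h₀ > (0:ℝ), ∀ h : ℝ, 0 < h → h ≤ h₀ → ∀ δ > (0:ℝ), ∃ ε₀ > (0:ℝ),
      ∀ ε : ℝ, 0 < ε → ε < ε₀ → ∀ μ ∈ M,
        0 < 1 - (survival e μ ε ((aTime e μ - h) * Real.exp (μ / ε)) -
            survival e μ ε ((aTime e μ + h) * Real.exp (μ / ε))) ∧
        |ε * Real.log (1 - (survival e μ ε ((aTime e μ - h) * Real.exp (μ / ε)) -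
            survival e μ ε ((aTime e μ + h) * Real.exp (μ / ε)))) -
          (μ - e (aTime e μ - h))| < δ := by
  rcases M.eq_empty_or_nonempty with rfl | hMne
  · exact ⟨1, one_pos, fun h _ _ δ hδ => ⟨1, one_pos, fun ε _ _ μ hμ => absurd hμ (notMem_empty μ)⟩⟩
  -- range facts
  have hper : Function.Periodic e 1 := hp
  have hrng : range e = e '' Icc 0 1 := by
    have := hper.image_Icc one_pos 0
    rw [zero_add] at this
    exact this.symm
  have hrngc : IsCompact (range e) := by
    rw [hrng]; exact isCompact_Icc.image hc
  have hrngne : (range e).Nonempty := range_nonempty e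
  have hbddA : BddAbove (range e) := hrngc.bddAbove
  have hbddB : BddBelow (range e) := hrngc.bddBelow
  have hleSup : ∀ t, e t ≤ sSup (range e) := fun t => le_csSup hbddA (mem_range_self t)
  have hgeInf : ∀ t, sInf (range e) ≤ e t := fun t => csInf_le hbddB (mem_range_self t)
  obtain ⟨tstar, htstar, htstarval⟩ : ∃ t ∈ Icc (0:ℝ) 1, e t = sInf (range e) := by
    have h1 := hrngc.sInf_mem hrngne
    rw [hrng] at h1
    obtain ⟨t, ht, ht'⟩ := (hrng ▸ h1 : sInf (range e) ∈ e '' Icc 0 1)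
    exact ⟨t, ht, ht'⟩
  -- constants from M
  have hμpM : sSup M ∈ M := hMc.sSup_mem hMne
  have hμmM : sInf M ∈ M := hMc.sInf_mem hMne
  have hleμp : ∀ μ ∈ M, μ ≤ sSup M := fun μ hμ => le_csSup hMc.bddAbove hμ
  have hgeμm : ∀ μ ∈ M, sInf M ≤ μ := fun μ hμ => csInf_le hMc.bddBelow hμ
  set c₀ : ℝ := e 0 - sSup M with hc₀def
  set c₁ : ℝ := sInf M - sInf (range e) with hc₁def
  have hc₀ : 0 < c₀ := sub_pos.2 (hMhigh _ hμpM)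
  have hc₁ : 0 < c₁ := sub_pos.2 (hMlow _ hμmM)
  set ρ : ℝ := min c₀ c₁ / 4 with hρdef
  have hρ : 0 < ρ := by positivity
  have hρc₀ : ρ ≤ c₀ / 4 := by
    apply div_le_div_of_nonneg_right (min_le_left _ _) <;> norm_num
  have hρc₁ : ρ ≤ c₁ / 4 := by
    apply div_le_div_of_nonneg_right (min_le_right _ _) <;> norm_num
  -- values within 2ρ of μ ∈ M are strictly between inf and sup
  have hval : ∀ μ ∈ M, ∀ v : ℝ, |v - μ| ≤ 2 * ρ →
      sInf (range e) < v ∧ v < sSup (range e) := by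
    intro μ hμ v hv
    rw [abs_le] at hv
    constructor
    · have h1 : sInf M ≤ μ := hgeμm μ hμ
      nlinarith [hρc₁, hρ.le]
    · have h1 : μ ≤ sSup M := hleμp μ hμ
      have h2 : e 0 ≤ sSup (range e) := hleSup 0
      nlinarith [hρc₀, hρ.le]
  -- uniform continuity modulus on K = Icc (-1) 3
  have hucK : ∀ r : ℝ, 0 < r → ∃ η > (0:ℝ), ∀ s t : ℝ, s ∈ Icc (-1:ℝ) 3 → t ∈ Icc (-1:ℝ) 3 →
      |s - t| ≤ η → |e s - e t| < r := by
    intro r hr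
    have huc : UniformContinuousOn e (Icc (-1:ℝ) 3) :=
      isCompact_Icc.uniformContinuousOn_of_continuous hc.continuousOn
    rw [Metric.uniformContinuousOn_iff] at huc
    obtain ⟨d, hd, hd'⟩ := huc r hr
    refine ⟨d / 2, by positivity, fun s t hs ht hst => ?_⟩
    have := hd' s hs t ht (by rw [Real.dist_eq]; linarith)
    rwa [Real.dist_eq] at this
  -- t₀ : uniform lower bound on aTime
  obtain ⟨η₀, hη₀, hη₀'⟩ := hucK c₀ hc₀
  set t₀ : ℝ := min η₀ 1 with ht₀def
  have ht₀ : 0 < t₀ := lt_min hη₀ one_pos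
  have ht₀1 : t₀ ≤ 1 := min_le_right _ _
  have hsmall : ∀ μ ∈ M, ∀ t : ℝ, 0 ≤ t → t ≤ t₀ → μ < e t := by
    intro μ hμ t ht ht'
    have htK : t ∈ Icc (-1:ℝ) 3 := ⟨by linarith, by
      have := le_trans ht' ht₀1; linarith⟩
    have h0K : (0:ℝ) ∈ Icc (-1:ℝ) 3 := by constructor <;> norm_num
    have := hη₀' t 0 htK h0K (by
      rw [sub_zero, abs_of_nonneg ht]; exact le_trans ht' (min_le_left _ _))
    have h2 : e 0 - e t < c₀ := by
      rw [abs_sub_lt_iff] at this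
      linarith [this.2]
    have h3 : μ ≤ sSup M := hleμp μ hμ
    simp only [hc₀def] at h2
    linarith
  -- basic aTime facts
  have haFacts : ∀ μ ∈ M, t₀ ≤ aTime e μ ∧ aTime e μ ≤ 1 ∧ e (aTime e μ) = μ ∧
      ∀ t, 0 ≤ t → t < aTime e μ → μ < e t := by
    intro μ hμ
    set S : Set ℝ := {t : ℝ | 0 ≤ t ∧ e t ≤ μ} with hSdef
    have hSne : S.Nonempty := ⟨tstar, htstar.1, htstarval ▸ (hMlow μ hμ).le⟩
    have hSbdd : BddBelow S := ⟨0, fun t ht => ht.1⟩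
    have hSclosed : IsClosed S := by
      have : S = {t : ℝ | 0 ≤ t} ∩ {t : ℝ | e t ≤ μ} := rfl
      rw [this]
      exact isClosed_Ici.inter (isClosed_le hc continuous_const)
    have haS : aTime e μ ∈ S := hSclosed.csInf_mem hSne hSbdd
    have ha1 : aTime e μ ≤ 1 := csInf_le hSbdd ⟨htstar.1, htstarval ▸ (hMlow μ hμ).le⟩
      |>.trans htstar.2
    have hat₀ : t₀ ≤ aTime e μ := by
      apply le_csInf hSne
      intro t ht
      by_contra hlt
      push_neg at hlt
      exact absurd ht.2 (not_le.2 (hsmall μ hμ t ht.1 hlt.le))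
    have hlta : ∀ t, 0 ≤ t → t < aTime e μ → μ < e t := by
      intro t ht hlt
      by_contra hle
      push_neg at hle
      exact absurd (csInf_le hSbdd ⟨ht, hle⟩) (not_le.2 hlt)
    have hea : e (aTime e μ) = μ := by
      refine le_antisymm haS.2 ?_
      by_contra hlt
      push_neg at hlt
      have hev : ∀ᶠ x in 𝓝 (aTime e μ), e x < μ :=
        (hc.continuousAt).eventually_lt_const hlt
      rw [Metric.eventually_nhds_iff] at hev
      obtain ⟨r, hr, hr'⟩ := hev
      set t : ℝ := max (aTime e μ - r / 2) 0 with htdef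
      have hta : t < aTime e μ := by
        apply max_lt (by linarith) (lt_of_lt_of_le ht₀ hat₀)
      have htd : dist t (aTime e μ) < r := by
        rw [Real.dist_eq, abs_of_nonpos (by linarith)]
        have : aTime e μ - r / 2 ≤ t := le_max_left _ _
        linarith
      exact absurd (hr' htd) (not_lt.2 (hlta t (le_max_right _ _) hta).le)
    exact ⟨hat₀, ha1, hea, hlta⟩
  -- the window half-width h₀
  obtain ⟨ηρ, hηρ, hηρ'⟩ := hucK ρ hρ
  set h₀ : ℝ := min (min (t₀ / 4) (ηρ / 4)) (1 / 4) with hh₀def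
  have hh₀ : 0 < h₀ := by
    apply lt_min (lt_min (by linarith) (by linarith)) (by norm_num)
  have hh₀t₀ : h₀ ≤ t₀ / 4 := le_trans (min_le_left _ _) (min_le_left _ _)
  have hh₀ηρ : h₀ ≤ ηρ / 4 := le_trans (min_le_left _ _) (min_le_right _ _)
  have hh₀1 : h₀ ≤ 1 / 4 := min_le_right _ _
  -- membership of window points in K
  have hwinK : ∀ μ ∈ M, ∀ t : ℝ, |t - aTime e μ| ≤ 2 * h₀ → t ∈ Icc (-1:ℝ) 3 := by
    intro μ hμ t ht
    obtain ⟨h1, h2, _, _⟩ := haFacts μ hμ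
    rw [abs_le] at ht
    constructor
    · have := le_trans hh₀t₀ (by linarith : t₀ / 4 ≤ 1 / 4)
      nlinarith [ht₀.le]
    · nlinarith
  have haK : ∀ μ ∈ M, aTime e μ ∈ Icc (-1:ℝ) 3 := by
    intro μ hμ
    exact hwinK μ hμ _ (by rw [sub_self, abs_zero]; positivity)
  -- values of e near aTime are within ρ of μ
  have hnear : ∀ μ ∈ M, ∀ t : ℝ, |t - aTime e μ| ≤ 2 * h₀ → |e t - μ| < ρ := by
    intro μ hμ t ht
    obtain ⟨_, _, hea, _⟩ := haFacts μ hμ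
    have := hηρ' t (aTime e μ) (hwinK μ hμ t ht) (haK μ hμ)
      (le_trans ht (by linarith))
    rwa [hea] at this
  -- e is strictly decreasing on the window
  have haAnti : ∀ μ ∈ M, StrictAntiOn e (Icc (aTime e μ - 2 * h₀) (aTime e μ + 2 * h₀)) := by
    intro μ hμ
    obtain ⟨hat₀, ha1, hea, hlta⟩ := haFacts μ hμ
    have hnoext : ∀ t ∈ Ioo (aTime e μ - 2 * h₀) (aTime e μ + 2 * h₀), ¬ IsLocalExtr e t := by
      intro t ht hext'
      have habs : |t - aTime e μ| ≤ 2 * h₀ := by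
        rw [abs_le]; constructor <;> [linarith [ht.1]; linarith [ht.2]]
      have h1 := hnear μ hμ t habs
      rw [abs_lt] at h1
      have h2 := hval μ hμ (e t) (by rw [abs_le]; constructor <;> nlinarith [hρ.le])
      rcases hext t hext' with h | h
      · exact absurd h (ne_of_lt h2.2)
      · exact absurd h (ne_of_gt h2.1)
    rcases hmono (aTime e μ - 2 * h₀) (aTime e μ + 2 * h₀) (by linarith) hnoext with h | h
    · exfalso
      have hmem1 : aTime e μ - 2 * h₀ ∈ Icc (aTime e μ - 2 * h₀) (aTime e μ + 2 * h₀) :=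
        ⟨le_refl _, by linarith⟩
      have hmem2 : aTime e μ ∈ Icc (aTime e μ - 2 * h₀) (aTime e μ + 2 * h₀) :=
        ⟨by linarith, by linarith⟩
      have hlt := h hmem1 hmem2 (by linarith)
      have h2 := hlta (aTime e μ - 2 * h₀) (by linarith) (by linarith)
      rw [hea] at hlt
      linarith
    · exact h
  -- window facts for each h ≤ 2h₀
  have hF : ∀ μ ∈ M, ∀ h : ℝ, 0 < h → h ≤ 2 * h₀ →
      (μ < e (aTime e μ - h)) ∧ (e (aTime e μ + h) < μ) ∧
      (∀ t ∈ Icc (0:ℝ) (aTime e μ - h), e (aTime e μ - h) ≤ e t) ∧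
      (∀ t ∈ Icc (0:ℝ) (aTime e μ + h), e (aTime e μ + h) ≤ e t) ∧
      (e (aTime e μ - h) - μ < ρ) := by
    intro μ hμ h hh hh2
    obtain ⟨hat₀, ha1, hea, hlta⟩ := haFacts μ hμ
    have hanti := haAnti μ hμ
    have hmemm : aTime e μ - h ∈ Icc (aTime e μ - 2 * h₀) (aTime e μ + 2 * h₀) :=
      ⟨by linarith, by linarith⟩
    have hmema : aTime e μ ∈ Icc (aTime e μ - 2 * h₀) (aTime e μ + 2 * h₀) :=
      ⟨by linarith, by linarith⟩
    have hmemp : aTime e μ + h ∈ Icc (aTime e μ - 2 * h₀) (aTime e μ + 2 * h₀) :=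
      ⟨by linarith, by linarith⟩
    have hF1 : μ < e (aTime e μ - h) := by
      have := hanti hmemm hmema (by linarith)
      rwa [hea] at this
    have hF2 : e (aTime e μ + h) < μ := by
      have := hanti hmema hmemp (by linarith)
      rwa [hea] at this
    have hρm : |e (aTime e μ - h) - μ| < ρ :=
      hnear μ hμ _ (by rw [show aTime e μ - h - aTime e μ = -h by ring,
        abs_neg, abs_of_pos hh]; linarith)
    have hFρ : e (aTime e μ - h) - μ < ρ := lt_of_le_of_lt (le_abs_self _) hρm
    have hahpos : 0 < aTime e μ - h := by linarith
    have hF3 : ∀ t ∈ Icc (0:ℝ) (aTime e μ - h), e (aTime e μ - h) ≤ e t := by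
      obtain ⟨t1, ht1, ht1min⟩ := isCompact_Icc.exists_isMinOn
        (nonempty_Icc.2 hahpos.le) hc.continuousOn
      rw [isMinOn_iff] at ht1min
      rcases eq_or_lt_of_le ht1.1 with h0 | h0
      · exfalso
        have h1 : e t1 ≤ e (aTime e μ - h) := ht1min _ ⟨hahpos.le, le_refl _⟩
        rw [← h0] at h1
        have h2 : μ ≤ sSup M := hleμp μ hμ
        simp only [hc₀def] at *
        nlinarith [hρc₀]
      rcases eq_or_lt_of_le ht1.2 with h1 | h1
      · intro t ht
        rw [← h1]
        exact ht1min t ht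
      · exfalso
        have hlm : IsLocalMin e t1 := by
          apply IsMinOn.isLocalMin _ (Icc_mem_nhds h0 h1)
          rw [isMinOn_iff]; exact ht1min
        have hv := hval μ hμ (e (aTime e μ - h)) (by
          rw [abs_le]; rw [abs_lt] at hρm; constructor <;> nlinarith [hρ.le])
        rcases hext t1 (Or.inl hlm) with h2 | h2
        · have h3 : e t1 ≤ e (aTime e μ - h) := ht1min _ ⟨hahpos.le, le_refl _⟩
          have := hleSup t1
          linarith [hv.2]
        · have h3 := hlta t1 h0.le (by linarith)
          have := hMlow μ hμ
          linarith
    have hF4 : ∀ t ∈ Icc (0:ℝ) (aTime e μ + h), e (aTime e μ + h) ≤ e t := by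
      intro t ht
      rcases lt_or_ge t (aTime e μ) with h1 | h1
      · exact le_of_lt (lt_trans hF2 (hlta t ht.1 h1))
      · rcases eq_or_lt_of_le ht.2 with h2 | h2
        · rw [h2]
        · exact (hanti ⟨by linarith, by linarith⟩ hmemp h2).le
    exact ⟨hF1, hF2, hF3, hF4, hFρ⟩
  -- continuity of aTime on M
  have hacont : ContinuousOn (aTime e) M := by
    intro μ hμ
    apply ContinuousAt.continuousWithinAt
    rw [Metric.continuousAt_iff]
    intro r hr
    set s : ℝ := min (r / 2) h₀ with hsdef
    have hs : 0 < s := lt_min (by linarith) hh₀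
    have hs2 : s ≤ 2 * h₀ := le_trans (min_le_right _ _) (by linarith)
    obtain ⟨hG1, hG2, hG3, _, _⟩ := hF μ hμ s hs hs2
    obtain ⟨hat₀, ha1, hea, hlta⟩ := haFacts μ hμ
    set d : ℝ := min (μ - e (aTime e μ + s)) (e (aTime e μ - s) - μ) with hddef
    have hd : 0 < d := lt_min (by linarith) (by linarith)
    refine ⟨d, hd, fun {μ'} hμ' => ?_⟩
    rw [Real.dist_eq] at hμ' ⊢
    rw [abs_lt] at hμ'
    have hd1 : d ≤ μ - e (aTime e μ + s) := min_le_left _ _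
    have hd2 : d ≤ e (aTime e μ - s) - μ := min_le_right _ _
    have hub : aTime e μ' ≤ aTime e μ + s := by
      apply csInf_le ⟨0, fun t ht => ht.1⟩
      refine ⟨by linarith, by linarith⟩
    have hlb : aTime e μ - s ≤ aTime e μ' := by
      have hne' : {t : ℝ | 0 ≤ t ∧ e t ≤ μ'}.Nonempty := ⟨tstar, htstar.1, by
        have := htstarval ▸ hgeInf (aTime e μ + s); linarith⟩
      apply le_csInf hne' 
      intro t ht
      by_contra hlt
      push_neg at hlt
      have := hG3 t ⟨ht.1, hlt.le⟩
      linarith [ht.2]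
    rw [abs_lt]
    have hsr : s ≤ r / 2 := min_le_left _ _
    constructor <;> linarith
  -- now fix h and produce the uniform constants β, γ
  refine ⟨h₀, hh₀, fun h hh hhh₀ => ?_⟩
  have hh2 : h ≤ 2 * h₀ := by linarith
  have hgβ : ContinuousOn (fun μ => e (aTime e μ - h) - μ) M :=
    (hc.comp_continuousOn (hacont.sub continuousOn_const)).sub continuousOn_id
  have hgγ : ContinuousOn (fun μ => μ - e (aTime e μ + h)) M :=
    continuousOn_id.sub (hc.comp_continuousOn (hacont.add continuousOn_const))
  obtain ⟨μβ, hμβ, hβmin⟩ := hMc.exists_isMinOn hMne hgβ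
  obtain ⟨μγ, hμγ, hγmin⟩ := hMc.exists_isMinOn hMne hgγ
  set β : ℝ := e (aTime e μβ - h) - μβ with hβdef
  set γ : ℝ := μγ - e (aTime e μγ + h) with hγdef
  have hβ : 0 < β := by
    have := (hF μβ hμβ h hh hh2).1
    simp only [hβdef]; linarith
  have hγ : 0 < γ := by
    have := (hF μγ hμγ h hh hh2).2.1
    simp only [hγdef]; linarith
  rw [isMinOn_iff] at hβmin hγmin
  have hβle : ∀ μ ∈ M, β ≤ e (aTime e μ - h) - μ := fun μ hμ => hβmin μ hμ
  have hγle : ∀ μ ∈ M, γ ≤ μ - e (aTime e μ + h) := fun μ hμ => hγmin μ hμ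
  -- δ stage
  intro δ hδ
  obtain ⟨ηδ, hηδ, hηδ'⟩ := hucK (δ / 4) (by linarith)
  obtain ⟨ηγ, hηγ, hηγ'⟩ := hucK (γ / 2) (by linarith)
  set η : ℝ := min ηδ (t₀ / 4) with hηdef
  set η' : ℝ := min ηγ (t₀ / 4) with hη'def
  have hη : 0 < η := lt_min hηδ (by linarith)
  have hη' : 0 < η' := lt_min hηγ (by linarith)
  set ε₀ : ℝ := min (min (δ / 2) (δ / (4 * (1 + |Real.log (η / 3)|))))
      (η' * γ ^ 2 / (16 * ρ)) with hε₀def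
  have hε₀ : 0 < ε₀ := by
    apply lt_min (lt_min (by linarith) (by positivity)) (by positivity)
  refine ⟨ε₀, hε₀, fun ε hε hεε μ hμ => ?_⟩
  -- the analytic core
  obtain ⟨hat₀, ha1, hea, hlta⟩ := haFacts μ hμ
  obtain ⟨hF1, hF2, hF3, hF4, hFρ⟩ := hF μ hμ h hh hh2
  have hβμ := hβle μ hμ
  have hγμ := hγle μ hμ
  have hTpos : 0 < Real.exp (μ / ε) := Real.exp_pos _
  have hic : Continuous fun s : ℝ => Real.exp (-(e s) / ε) :=
    Real.continuous_exp.comp ((hc.neg).div_const ε)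
  have hGval : ∀ u : ℝ, survival e μ ε (u * Real.exp (μ / ε)) =
      Real.exp (-(Real.exp (μ / ε) * ∫ s in (0:ℝ)..u, Real.exp (-(e s) / ε))) := by
    intro u
    rw [survival]
    rw [intervalIntegral.integral_comp_div (fun s : ℝ => Real.exp (-(e s) / ε)) hTpos.ne']
    rw [zero_div, mul_div_cancel_right₀ _ hTpos.ne', smul_eq_mul]
  set A := aTime e μ with hAdef
  set L : ℝ := μ - e (A - h) with hLdef
  have hLβ : L ≤ -β := by simp only [hLdef]; linarith
  have hLρ : -ρ < L := by simp only [hLdef]; linarith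
  set J : ℝ → ℝ := fun u => ∫ s in (0:ℝ)..u, Real.exp (-(e s) / ε) with hJdef
  set x₁ : ℝ := Real.exp (μ / ε) * J (A - h) with hx₁def
  set x₂ : ℝ := Real.exp (μ / ε) * J (A + h) with hx₂def
  have hηt₀ : η ≤ t₀ / 4 := min_le_right _ _
  have hη't₀ : η' ≤ t₀ / 4 := min_le_right _ _
  have hAh : t₀ / 2 ≤ A - h - η := by linarith
  -- upper bound on x₁
  have hJub : J (A - h) ≤ (A - h) * Real.exp (-(e (A - h)) / ε) := by
    have hmo := intervalIntegral.integral_mono_on (by linarith : (0:ℝ) ≤ A - h)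
      (hic.intervalIntegrable _ _)
      ((intervalIntegrable_const : IntervalIntegrable
        (fun _ => Real.exp (-(e (A - h)) / ε)) MeasureTheory.volume 0 (A - h)))
      (fun t ht => Real.exp_le_exp.2 ((div_le_div_iff_of_pos_right hε).2 (neg_le_neg (hF3 t ht))))
    rwa [intervalIntegral.integral_const, smul_eq_mul, sub_zero] at hmo
  have hx₁ub : x₁ ≤ Real.exp (L / ε) := by
    have h1 : J (A - h) ≤ Real.exp (-(e (A - h)) / ε) := by
      have h2 : (A - h) * Real.exp (-(e (A - h)) / ε) ≤ 1 * Real.exp (-(e (A - h)) / ε) := by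
        apply mul_le_mul_of_nonneg_right (by linarith) (Real.exp_pos _).le
      rw [one_mul] at h2
      exact hJub.trans h2
    calc x₁ ≤ Real.exp (μ / ε) * Real.exp (-(e (A - h)) / ε) :=
          mul_le_mul_of_nonneg_left h1 hTpos.le
      _ = Real.exp (L / ε) := by
          rw [← Real.exp_add, hLdef, sub_div]; ring_nf
  -- lower bound on x₁
  have hJlb : η * Real.exp ((-(e (A - h)) - δ / 4) / ε) ≤ J (A - h) := by
    have hsplit : J (A - h) = (∫ s in (0:ℝ)..(A - h - η), Real.exp (-(e s) / ε)) +
        ∫ s in (A - h - η)..(A - h), Real.exp (-(e s) / ε) :=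
      (intervalIntegral.integral_add_adjacent_intervals
        (hic.intervalIntegrable _ _) (hic.intervalIntegrable _ _)).symm
    have h1 : (0:ℝ) ≤ ∫ s in (0:ℝ)..(A - h - η), Real.exp (-(e s) / ε) :=
      intervalIntegral.integral_nonneg (by linarith) (fun t _ => (Real.exp_pos _).le)
    have h2 : η * Real.exp ((-(e (A - h)) - δ / 4) / ε) ≤
        ∫ s in (A - h - η)..(A - h), Real.exp (-(e s) / ε) := by
      have hmo := intervalIntegral.integral_mono_on (by linarith : A - h - η ≤ A - h)
        ((intervalIntegrable_const : IntervalIntegrable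
          (fun _ => Real.exp ((-(e (A - h)) - δ / 4) / ε)) MeasureTheory.volume
          (A - h - η) (A - h)))
        (hic.intervalIntegrable _ _)
        (fun t ht => Real.exp_le_exp.2 ((div_le_div_iff_of_pos_right hε).2 (by
          have hKt : t ∈ Icc (-1:ℝ) 3 :=
            ⟨by linarith [ht.1, hAh, ht₀], by linarith [ht.2, ha1, hh]⟩
          have hKa : A - h ∈ Icc (-1:ℝ) 3 :=
            ⟨by linarith [hAh, ht₀, hη], by linarith [ha1, hh]⟩
          have hηle : η ≤ ηδ := min_le_left _ _
          have := hηδ' t (A - h) hKt hKa (by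
            rw [abs_le]
            exact ⟨by linarith [ht.1], by linarith [ht.2, hηδ.le]⟩)
          rw [abs_lt] at this
          linarith [this.1])))
      rwa [intervalIntegral.integral_const, smul_eq_mul,
        show A - h - (A - h - η) = η from by ring] at hmo
    linarith
  have hx₁lb : η * Real.exp ((L - δ / 4) / ε) ≤ x₁ := by
    have h1 := mul_le_mul_of_nonneg_left hJlb hTpos.le
    calc η * Real.exp ((L - δ / 4) / ε)
        = Real.exp (μ / ε) * (η * Real.exp ((-(e (A - h)) - δ / 4) / ε)) := by
          rw [← mul_assoc, mul_comm (Real.exp (μ / ε)) η, mul_assoc, ← Real.exp_add]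
          congr 1
          rw [hLdef]
          field_simp
          ring
      _ ≤ x₁ := h1
  -- lower bound on x₂
  have hJ2lb : η' * Real.exp ((-μ + γ / 2) / ε) ≤ J (A + h) := by
    have hsplit : J (A + h) = (∫ s in (0:ℝ)..(A + h - η'), Real.exp (-(e s) / ε)) +
        ∫ s in (A + h - η')..(A + h), Real.exp (-(e s) / ε) :=
      (intervalIntegral.integral_add_adjacent_intervals
        (hic.intervalIntegrable _ _) (hic.intervalIntegrable _ _)).symm
    have h1 : (0:ℝ) ≤ ∫ s in (0:ℝ)..(A + h - η'), Real.exp (-(e s) / ε) :=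
      intervalIntegral.integral_nonneg (by linarith) (fun t _ => (Real.exp_pos _).le)
    have h2 : η' * Real.exp ((-μ + γ / 2) / ε) ≤
        ∫ s in (A + h - η')..(A + h), Real.exp (-(e s) / ε) := by
      have hmo := intervalIntegral.integral_mono_on (by linarith : A + h - η' ≤ A + h)
        ((intervalIntegrable_const : IntervalIntegrable
          (fun _ => Real.exp ((-μ + γ / 2) / ε)) MeasureTheory.volume
          (A + h - η') (A + h)))
        (hic.intervalIntegrable _ _)
        (fun t ht => Real.exp_le_exp.2 ((div_le_div_iff_of_pos_right hε).2 (by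
          have hKt : t ∈ Icc (-1:ℝ) 3 :=
            ⟨by linarith [ht.1, hη't₀, hat₀, ht₀, hh], by linarith [ht.2, ha1, hh, hhh₀, hh₀1]⟩
          have hKa : A + h ∈ Icc (-1:ℝ) 3 :=
            ⟨by linarith [hat₀, ht₀, hh], by linarith [ha1, hh, hhh₀, hh₀1]⟩
          have hηle : η' ≤ ηγ := min_le_left _ _
          have := hηγ' t (A + h) hKt hKa (by
            rw [abs_le]
            exact ⟨by linarith [ht.1], by linarith [ht.2, hηγ.le]⟩)
          rw [abs_lt] at this
          linarith [this.1])))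
      rwa [intervalIntegral.integral_const, smul_eq_mul,
        show A + h - (A + h - η') = η' from by ring] at hmo
    linarith
  have hx₂lb : η' * Real.exp ((γ / 2) / ε) ≤ x₂ := by
    have h1 := mul_le_mul_of_nonneg_left hJ2lb hTpos.le
    calc η' * Real.exp ((γ / 2) / ε)
        = Real.exp (μ / ε) * (η' * Real.exp ((-μ + γ / 2) / ε)) := by
          rw [← mul_assoc, mul_comm (Real.exp (μ / ε)) η', mul_assoc, ← Real.exp_add]
          congr 1
          field_simp
          ring
      _ ≤ x₂ := h1
  have hε1 : ε ≤ δ / 2 := hεε.le.trans ((min_le_left _ _).trans (min_le_left _ _))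
  have hε2 : ε ≤ δ / (4 * (1 + |Real.log (η / 3)|)) :=
    hεε.le.trans ((min_le_left _ _).trans (min_le_right _ _))
  have hε3 : ε ≤ η' * γ ^ 2 / (16 * ρ) := hεε.le.trans (min_le_right _ _)
  have hGm : survival e μ ε ((A - h) * Real.exp (μ / ε)) = Real.exp (-x₁) := hGval (A - h)
  have hGp : survival e μ ε ((A + h) * Real.exp (μ / ε)) = Real.exp (-x₂) := hGval (A + h)
  rw [hGm, hGp]
  exact numericCore x₁ x₂ L η η' γ ρ β δ ε hε hδ hη hη' hγ hρ hβ hLβ hLρ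
    hx₁ub hx₁lb hx₂lb hε1 hε2 hε3

/-- Theorem 3.5: asymptotics of transition-window probabilities of the
reduced two-state Markov chain: `lim_{ε→0} ε log(1 − N(ε,μ)) = max_{i=±}
{μ − e_i(a_μ^i − h)}`, uniformly on compact subsets `M` of the resonance interval. -/
theorem markov_chain_window_asymptotics (ep : ℝ → ℝ)
    (hcont : Continuous ep)
    (hper : ∀ t, ep (t + 1) = ep t)
    (hext : ∀ t, IsLocalExtr ep t → ep t = sSup (range ep) ∨ ep t = sInf (range ep))
    (hmono : ∀ a c : ℝ, a < c → (∀ t ∈ Ioo a c, ¬ IsLocalExtr ep t) →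
      StrictMonoOn ep (Icc a c) ∨ StrictAntiOn ep (Icc a c))
    (φl : ℝ) (hφl : φl ∈ Ioo (0:ℝ) 1)
    (em : ℝ → ℝ) (hem : ∀ t, em t = ep (t + φl))
    (hIR : max (sInf (range ep)) (sInf (range em)) <
      sInf (range fun t => max (ep t) (em t)))
    (M : Set ℝ) (hMc : IsCompact M)
    (hM : M ⊆ Ioo (max (sInf (range ep)) (sInf (range em)))
      (sInf (range fun t => max (ep t) (em t))))
    (hM0 : ∀ μ ∈ M, μ < ep 0 ∧ μ < em 0) :
    ∃ h₀ > (0:ℝ), ∀ h : ℝ, 0 < h → h ≤ h₀ →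
      ∀ δ > (0:ℝ), ∃ ε₀ > (0:ℝ), ∀ ε : ℝ, 0 < ε → ε < ε₀ → ∀ μ ∈ M,
        |ε * Real.log (1 - windowProb ep em h ε μ) -
          max (μ - ep (aTime ep μ - h)) (μ - em (aTime em μ - h))| < δ := by
  have hemx : em = fun t => ep (t + φl) := funext hem
  have hcm : Continuous em := by
    rw [hemx]; exact hcont.comp (continuous_add_right φl)
  have hperm : ∀ t, em (t + 1) = em t := by
    intro t
    rw [hem, hem, show t + 1 + φl = t + φl + 1 by ring, hper]
  have hrngm : range em = range ep := by
    ext y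
    constructor
    · rintro ⟨t, rfl⟩
      exact ⟨t + φl, (hem t).symm⟩
    · rintro ⟨t, rfl⟩
      exact ⟨t - φl, by rw [hem, sub_add_cancel]⟩
  have hextm : ∀ t, IsLocalExtr em t → em t = sSup (range em) ∨ em t = sInf (range em) := by
    intro t ht
    have ht' : IsLocalExtr (fun s => ep (s + φl)) t := by rwa [hemx] at ht
    rcases hext _ (eshift_extr' ht') with h | h
    · left; rw [hem, hrngm]; exact h
    · right; rw [hem, hrngm]; exact h
  have hmonom : ∀ a c : ℝ, a < c → (∀ t ∈ Ioo a c, ¬ IsLocalExtr em t) →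
      StrictMonoOn em (Icc a c) ∨ StrictAntiOn em (Icc a c) := by
    intro a c hac hno
    have hno' : ∀ t ∈ Ioo (a + φl) (c + φl), ¬ IsLocalExtr ep t := by
      intro t ht hx
      refine hno (t - φl) ⟨by linarith [ht.1], by linarith [ht.2]⟩ ?_
      have h1 : IsLocalExtr (fun s => ep (s + φl)) (t - φl) :=
        eshift_extr (by rwa [sub_add_cancel])
      rwa [← hemx] at h1
    rcases hmono (a + φl) (c + φl) (by linarith) hno' with h | h
    · left
      intro x hx y hy hxy
      rw [hem, hem]
      exact h ⟨by linarith [hx.1], by linarith [hx.2]⟩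
        ⟨by linarith [hy.1], by linarith [hy.2]⟩ (by linarith)
    · right
      intro x hx y hy hxy
      rw [hem, hem]
      exact h ⟨by linarith [hx.1], by linarith [hx.2]⟩
        ⟨by linarith [hy.1], by linarith [hy.2]⟩ (by linarith)
  have hMlowp : ∀ μ ∈ M, sInf (range ep) < μ := fun μ hμ =>
    lt_of_le_of_lt (le_max_left _ _) (hM hμ).1
  have hMlowm : ∀ μ ∈ M, sInf (range em) < μ := fun μ hμ =>
    lt_of_le_of_lt (le_max_right _ _) (hM hμ).1
  obtain ⟨h₀p, hh₀p, HP⟩ := keyLemma ep hcont hper hext hmono M hMc hMlowp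
    (fun μ hμ => (hM0 μ hμ).1)
  obtain ⟨h₀m, hh₀m, HM⟩ := keyLemma em hcm hperm hextm hmonom M hMc hMlowm
    (fun μ hμ => (hM0 μ hμ).2)
  refine ⟨min h₀p h₀m, lt_min hh₀p hh₀m, fun h hh hhm δ hδ => ?_⟩
  obtain ⟨ε₀p, hε₀p, HP'⟩ := HP h hh (hhm.trans (min_le_left _ _)) δ hδ
  obtain ⟨ε₀m, hε₀m, HM'⟩ := HM h hh (hhm.trans (min_le_right _ _)) δ hδ
  refine ⟨min ε₀p ε₀m, lt_min hε₀p hε₀m, fun ε hε hεε μ hμ => ?_⟩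
  obtain ⟨hposp, habsp⟩ := HP' ε hε (hεε.trans_le (min_le_left _ _)) μ hμ
  obtain ⟨hposm, habsm⟩ := HM' ε hε (hεε.trans_le (min_le_right _ _)) μ hμ
  set Dp : ℝ := survival ep μ ε ((aTime ep μ - h) * Real.exp (μ / ε)) -
    survival ep μ ε ((aTime ep μ + h) * Real.exp (μ / ε)) with hDpdef
  set Dm : ℝ := survival em μ ε ((aTime em μ - h) * Real.exp (μ / ε)) -
    survival em μ ε ((aTime em μ + h) * Real.exp (μ / ε)) with hDmdef
  have hwp : windowProb ep em h ε μ = min Dp Dm := rfl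
  rw [hwp]
  have h1 : (1:ℝ) - min Dp Dm = max (1 - Dp) (1 - Dm) := by
    rcases le_total Dp Dm with hcmp | hcmp
    · rw [min_eq_left hcmp, max_eq_left (by linarith)]
    · rw [min_eq_right hcmp, max_eq_right (by linarith)]
  rw [h1]
  have h2 : Real.log (max (1 - Dp) (1 - Dm)) =
      max (Real.log (1 - Dp)) (Real.log (1 - Dm)) := by
    rcases le_total (1 - Dp) (1 - Dm) with hcmp | hcmp
    · rw [max_eq_right hcmp, max_eq_right (Real.log_le_log hposp hcmp)]
    · rw [max_eq_left hcmp, max_eq_left (Real.log_le_log hposm hcmp)]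
  rw [h2]
  have h3 : ε * max (Real.log (1 - Dp)) (Real.log (1 - Dm)) =
      max (ε * Real.log (1 - Dp)) (ε * Real.log (1 - Dm)) := by
    rcases le_total (Real.log (1 - Dp)) (Real.log (1 - Dm)) with hcmp | hcmp
    · rw [max_eq_right hcmp, max_eq_right (mul_le_mul_of_nonneg_left hcmp hε.le)]
    · rw [max_eq_left hcmp, max_eq_left (mul_le_mul_of_nonneg_left hcmp hε.le)]
  rw [h3]
  calc |max (ε * Real.log (1 - Dp)) (ε * Real.log (1 - Dm)) -
        max (μ - ep (aTime ep μ - h)) (μ - em (aTime em μ - h))|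
      ≤ max |ε * Real.log (1 - Dp) - (μ - ep (aTime ep μ - h))|
          |ε * Real.log (1 - Dm) - (μ - em (aTime em μ - h))| :=
        abs_max_sub_max_le_max _ _ _ _
    _ < δ := max_lt habsp habsm
end

section
/- (Laplace-type asymptotics for slowly oscillating exponents) Let e : ℝ → ℝ be continuous and one-periodic, let μ > 0, and set T^ε = exp(μ/ε) for ε > 0. Then for every fixed t > 0, lim_{ε → 0} ε · log ∫₀^{t T^ε} exp( −e(r/T^ε)/ε ) dr = μ − inf_{0 ≤ u ≤ t} e(u). -/
open Set Filter Topology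

private lemma laplace_key (e : ℝ → ℝ) (hcont : Continuous e) (t : ℝ) (ht : 0 < t) :
    Tendsto (fun ε : ℝ => ε * Real.log (∫ u in (0:ℝ)..t, Real.exp (-(e u) / ε)))
      (𝓝[>] (0:ℝ)) (𝓝 (- sInf (e '' Icc (0:ℝ) t))) := by
  set m := sInf (e '' Icc (0:ℝ) t) with hm
  obtain ⟨u₀, hu₀, hmeq, hmin⟩ :=
    (isCompact_Icc (a := (0:ℝ)) (b := t)).exists_sInf_image_eq_and_le
      (nonempty_Icc.2 ht.le) hcont.continuousOn
  have hint : ∀ (ε a b : ℝ), IntervalIntegrable (fun u => Real.exp (-(e u) / ε))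
      MeasureTheory.volume a b := fun ε a b =>
    Continuous.intervalIntegrable (by continuity) a b
  have hIpos : ∀ ε : ℝ, 0 < ∫ u in (0:ℝ)..t, Real.exp (-(e u) / ε) := fun ε =>
    intervalIntegral.intervalIntegral_pos_of_pos (hint ε 0 t) (fun x => Real.exp_pos _) ht
  refine tendsto_order.2 ⟨?_, ?_⟩
  · -- lower bound
    intro a' ha'
    set δ : ℝ := (-m - a') / 2 with hδdef
    have hδ : 0 < δ := by simp only [hδdef]; linarith
    obtain ⟨r, hr, hball⟩ := Metric.continuousAt_iff.1 (hcont.continuousAt (x := u₀)) δ hδ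
    set s : ℝ := min (r / 2) (t / 2) with hsdef
    have hs : 0 < s := lt_min (by linarith) (by linarith)
    set a : ℝ := max 0 (u₀ - s) with hadef
    set b : ℝ := min t (u₀ + s) with hbdef
    have h0a : 0 ≤ a := le_max_left _ _
    have hbt : b ≤ t := min_le_left _ _
    have hab : a < b := by
      refine max_lt (lt_min ht (by nlinarith [hu₀.1])) (lt_min (by nlinarith [hu₀.2]) (by linarith))
    have hen : ∀ u ∈ Icc a b, e u ≤ m + δ := by
      intro u hu
      have h1 : u₀ - s ≤ u := le_trans (le_max_right _ _) hu.1
      have h2 : u ≤ u₀ + s := le_trans hu.2 (min_le_right _ _)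
      have hd : dist u u₀ < r := by
        rw [Real.dist_eq]
        have : s ≤ r / 2 := min_le_left _ _
        rw [abs_sub_lt_iff]; constructor <;> linarith
      have := hball hd
      rw [Real.dist_eq, abs_sub_lt_iff] at this
      have h3 := this.1
      have hmu : m = e u₀ := hm.trans hmeq
      linarith
    -- eventually ε * log (b - a) > -δ
    have hzero : Tendsto (fun ε : ℝ => ε * Real.log (b - a)) (𝓝[>] (0:ℝ)) (𝓝 0) := by
      have h0 : Tendsto (fun ε : ℝ => ε * Real.log (b - a)) (𝓝 (0:ℝ))
          (𝓝 (0 * Real.log (b - a))) := tendsto_id.mul_const _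
      rw [zero_mul] at h0
      exact h0.mono_left nhdsWithin_le_nhds
    have hev : ∀ᶠ ε in 𝓝[>] (0:ℝ), -δ < ε * Real.log (b - a) :=
      (hzero.eventually (eventually_gt_nhds (by linarith : -δ < (0:ℝ))))
    filter_upwards [hev, self_mem_nhdsWithin] with ε hev hε
    have hε : 0 < ε := hε
    -- lower bound on the integral
    have hb1 : (b - a) * Real.exp (-(m + δ) / ε) ≤ ∫ u in (0:ℝ)..t, Real.exp (-(e u) / ε) := by
      have step1 : (b - a) * Real.exp (-(m + δ) / ε)
          ≤ ∫ u in a..b, Real.exp (-(e u) / ε) := by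
        have : (∫ _ in a..b, Real.exp (-(m + δ) / ε)) = (b - a) * Real.exp (-(m + δ) / ε) := by
          simp [smul_eq_mul]
        rw [← this]
        refine intervalIntegral.integral_mono_on hab.le
          (intervalIntegrable_const) (hint ε a b) ?_
        intro u hu
        have := hen u hu
        exact Real.exp_le_exp.2 (div_le_div_of_nonneg_right (by linarith) hε.le)
      refine step1.trans ?_
      exact intervalIntegral.integral_mono_interval h0a hab.le hbt
        (Filter.Eventually.of_forall fun x => (Real.exp_pos _).le) (hint ε 0 t)
    have hlog : ε * Real.log ((b - a) * Real.exp (-(m + δ) / ε))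
        = ε * Real.log (b - a) - (m + δ) := by
      rw [Real.log_mul (by linarith : b - a ≠ 0) (Real.exp_ne_zero _), Real.log_exp]
      field_simp
      ring
    have hmono : ε * Real.log ((b - a) * Real.exp (-(m + δ) / ε))
        ≤ ε * Real.log (∫ u in (0:ℝ)..t, Real.exp (-(e u) / ε)) := by
      have hpos : 0 < (b - a) * Real.exp (-(m + δ) / ε) :=
        mul_pos (by linarith) (Real.exp_pos _)
      exact mul_le_mul_of_nonneg_left (Real.log_le_log hpos hb1) hε.le
    have : a' = -m - 2 * δ := by simp only [hδdef]; ring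
    rw [this]
    calc -m - 2 * δ < ε * Real.log (b - a) - (m + δ) := by linarith
    _ = ε * Real.log ((b - a) * Real.exp (-(m + δ) / ε)) := hlog.symm
    _ ≤ _ := hmono
  · -- upper bound
    intro b' hb'
    have hzero : Tendsto (fun ε : ℝ => ε * Real.log t) (𝓝[>] (0:ℝ)) (𝓝 0) := by
      have h0 : Tendsto (fun ε : ℝ => ε * Real.log t) (𝓝 (0:ℝ))
          (𝓝 (0 * Real.log t)) := tendsto_id.mul_const _
      rw [zero_mul] at h0
      exact h0.mono_left nhdsWithin_le_nhds
    have hev : ∀ᶠ ε in 𝓝[>] (0:ℝ), ε * Real.log t < b' + m :=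
      (hzero.eventually (eventually_lt_nhds (by linarith : (0:ℝ) < b' + m)))
    filter_upwards [hev, self_mem_nhdsWithin] with ε hev hε
    have hε : 0 < ε := hε
    have hb1 : (∫ u in (0:ℝ)..t, Real.exp (-(e u) / ε)) ≤ t * Real.exp (-m / ε) := by
      have : (∫ _ in (0:ℝ)..t, Real.exp (-m / ε)) = t * Real.exp (-m / ε) := by
        simp [smul_eq_mul]
      rw [← this]
      refine intervalIntegral.integral_mono_on ht.le
        (hint ε 0 t) (intervalIntegrable_const) ?_
      intro u hu
      have hmu : m = e u₀ := hm.trans hmeq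
      have : m ≤ e u := hmu.le.trans (hmin u hu)
      exact Real.exp_le_exp.2 (div_le_div_of_nonneg_right (by linarith) hε.le)
    have hlog : ε * Real.log (t * Real.exp (-m / ε)) = ε * Real.log t - m := by
      rw [Real.log_mul ht.ne' (Real.exp_ne_zero _), Real.log_exp]
      field_simp
      ring
    calc ε * Real.log (∫ u in (0:ℝ)..t, Real.exp (-(e u) / ε))
        ≤ ε * Real.log (t * Real.exp (-m / ε)) :=
          mul_le_mul_of_nonneg_left (Real.log_le_log (hIpos ε) hb1) hε.le
    _ = ε * Real.log t - m := hlog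
    _ < b' := by linarith

/-- Laplace-type asymptotics for slowly oscillating exponents:
for continuous one-periodic `e`, `μ > 0`, `T^ε = exp(μ/ε)` and fixed `t > 0`,
`lim_{ε→0} ε log ∫₀^{tT^ε} exp(−e(r/T^ε)/ε) dr = μ − inf_{0 ≤ u ≤ t} e(u)`. -/
theorem laplace_asymptotics_slow_oscillation (e : ℝ → ℝ)
    (hcont : Continuous e)
    (hper : ∀ u, e (u + 1) = e u)
    (μ : ℝ) (hμ : 0 < μ) (t : ℝ) (ht : 0 < t) :
    Tendsto (fun ε : ℝ =>
        ε * Real.log (∫ r in (0:ℝ)..(t * Real.exp (μ / ε)),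
          Real.exp (-(e (r / Real.exp (μ / ε))) / ε)))
      (𝓝[>] (0:ℝ)) (𝓝 (μ - sInf (e '' Icc (0:ℝ) t))) := by
  have key := laplace_key e hcont t ht
  have hIpos : ∀ ε : ℝ, 0 < ∫ u in (0:ℝ)..t, Real.exp (-(e u) / ε) := fun ε =>
    intervalIntegral.intervalIntegral_pos_of_pos
      (Continuous.intervalIntegrable (by continuity) 0 t) (fun x => Real.exp_pos _) ht
  have main : Tendsto (fun ε : ℝ =>
      μ + ε * Real.log (∫ u in (0:ℝ)..t, Real.exp (-(e u) / ε)))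
      (𝓝[>] (0:ℝ)) (𝓝 (μ + -(sInf (e '' Icc (0:ℝ) t)))) :=
    tendsto_const_nhds.add key
  rw [← sub_eq_add_neg] at main
  refine main.congr' ?_
  filter_upwards [self_mem_nhdsWithin] with ε hε
  have hε : 0 < ε := hε
  set T : ℝ := Real.exp (μ / ε) with hT
  have hTpos : 0 < T := Real.exp_pos _
  have hsub : (∫ r in (0:ℝ)..(t * T), Real.exp (-(e (r / T)) / ε))
      = T * ∫ u in (0:ℝ)..t, Real.exp (-(e u) / ε) := by
    rw [intervalIntegral.integral_comp_div (f := fun u => Real.exp (-(e u) / ε)) hTpos.ne',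
      zero_div, mul_div_cancel_right₀ _ hTpos.ne', smul_eq_mul]
  rw [hsub, Real.log_mul hTpos.ne' (hIpos ε).ne', hT, Real.log_exp]
  field_simp
end
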